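/- Let n ≥ 6 and let 𝔤 be an n-dimensional non-model complex filiform Lie algebra with associated triple (n−2,n−2,n). Then there exist an adapted basis {f_1,…,f_n} of 𝔤 and complex numbers γ′, β′ such that the only nonzero brackets among the basis vectors (up to antisymmetry) are [f_1,f_h] = f_{h−1} for 3 ≤ h ≤ n, [f_{n−2},f_{n−1}] = f_2, [f_{n−2},f_n] = f_3 + γ′ f_2, and [f_{n−1},f_n] = f_4 + γ′ f_3 + β′ f_2. -/

import Mathlib

open Module

variable (L : Type) [LieRing L] [LieAlgebra ℂ L]

/-- `C L k` is the `k`-th term of the lower central series of `L`,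
with the convention `C L 1 = L`. -/
def C (k : ℕ) : LieIdeal ℂ L := LieModule.lowerCentralSeries ℂ L L (k - 1)

/-- `L` is a filiform Lie algebra of dimension `n`. -/
def IsFiliform (n : ℕ) : Prop :=
  2 ≤ n ∧ FiniteDimensional ℂ L ∧ finrank ℂ L = n ∧
    ∀ k, 2 ≤ k → k ≤ n → finrank ℂ (C L k) = n - k

/-- `e 1, …, e n` is an adapted basis of `L`. -/
def IsAdaptedBasis (n : ℕ) (e : ℕ → L) : Prop :=
  (∃ b : Basis (Fin n) ℂ L, ∀ i : Fin n, b i = e (i.1 + 1)) ∧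
  (∀ h, 3 ≤ h → h ≤ n → ⁅e 1, e h⁆ = e (h - 1)) ∧
  (∀ h, 1 ≤ h → h ≤ n → ⁅e 2, e h⁆ = 0) ∧
  (∀ h, 2 ≤ h → h ≤ n → ⁅e 3, e h⁆ = 0)

/-- `L` is (isomorphic to) the model filiform Lie algebra of dimension `n`,
i.e. it admits a basis whose only nonzero brackets are `⁅e 1, e h⁆ = e (h-1)`. -/
def IsModel (n : ℕ) : Prop :=
  ∃ e : ℕ → L,
    (∃ b : Basis (Fin n) ℂ L, ∀ i : Fin n, b i = e (i.1 + 1)) ∧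
    (∀ h, 3 ≤ h → h ≤ n → ⁅e 1, e h⁆ = e (h - 1)) ∧
    ⁅e 1, e 2⁆ = 0 ∧
    (∀ i j, 2 ≤ i → i < j → j ≤ n → ⁅e i, e j⁆ = 0)

/-- `L` is a non-model filiform Lie algebra with associated triple `(z₁, z₂, n)`. -/
def HasTriple (z₁ z₂ n : ℕ) : Prop :=
  IsFiliform L n ∧ ¬ IsModel L n ∧
  ∀ e : ℕ → L, IsAdaptedBasis L n e →
    IsLeast {k | 4 ≤ k ∧ ⁅e k, e n⁆ ≠ 0} z₁ ∧
    IsLeast {k | 4 ≤ k ∧ ⁅e k, e (k + 1)⁆ ≠ 0} z₂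

/-- `θ_k(L)`: the least `ℓ ≥ 1` with `⁅C^k L, C^ℓ L⁆ = 0`. -/
noncomputable def theta (k : ℕ) : ℕ := sInf {ℓ | 1 ≤ ℓ ∧ ⁅C L k, C L ℓ⁆ = ⊥}

/-- `P h u` is the `h`-th coordinate of `u` in the basis `e 1, …, e n` (and `0` for
`h` outside `{1, …, n}`). -/
def IsCoords (n : ℕ) (e : ℕ → L) (P : ℕ → L → ℂ) : Prop :=
  (∀ u : L, u = ∑ h ∈ Finset.Icc 1 n, P h u • e h) ∧
  (∀ u : L, ∀ h, h ∉ Finset.Icc 1 n → P h u = 0)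

/-- `(α, γ, β)` is a family of parameters associated with `L` (with triple `(z₁, z₂, n)`)
with respect to the adapted basis `e` with coordinate functions `P`. -/
def IsAssocParams (z₁ z₂ n : ℕ) (e : ℕ → L) (P : ℕ → L → ℂ)
    (α γ : ℕ → ℂ) (β : ℕ → ℕ → ℂ) : Prop :=
  (∀ i, i ≤ z₂ - z₁ →
    ⁅e (z₁ + i), e (z₂ + 1)⁆ = ∑ m ∈ Finset.Icc 1 (i + 1), α m • e (i + 3 - m)) ∧
  (∀ j, 2 ≤ j → j ≤ n - z₂ →
    ⁅e z₁, e (z₂ + j)⁆ =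
      α 1 • e (j + 1) + ∑ m ∈ Finset.Icc 1 (j - 1), γ m • e (j + 1 - m)) ∧
  (∀ k ℓ, 2 ≤ ℓ → ℓ ≤ n - z₂ → 1 ≤ k → k < z₂ - z₁ + ℓ →
    ⁅e (z₁ + k), e (z₂ + ℓ)⁆ =
      (∑ h ∈ Finset.Icc 2 (k + ℓ),
        P h (⁅e (z₁ + k - 1), e (z₂ + ℓ)⁆ + ⁅e (z₁ + k), e (z₂ + ℓ - 1)⁆) • e (h + 1))
      + β k ℓ • e 2)

/-- The normalized bracket table for triple `(n-2, n-2, n)`: the only nonzero brackets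
among the basis vectors `f 1, …, f n` (up to antisymmetry) are the displayed ones. -/
def LawNm2Normalized (n : ℕ) (f : ℕ → L) (γ' β' : ℂ) : Prop :=
  ⁅f 1, f 2⁆ = 0 ∧
  (∀ h, 3 ≤ h → h ≤ n → ⁅f 1, f h⁆ = f (h - 1)) ∧
  (∀ i j, 2 ≤ i → i < j → j ≤ n →
    ¬(i = n - 2 ∧ j = n - 1) → ¬(i = n - 2 ∧ j = n) → ¬(i = n - 1 ∧ j = n) →
    ⁅f i, f j⁆ = 0) ∧
  ⁅f (n - 2), f (n - 1)⁆ = f 2 ∧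
  ⁅f (n - 2), f n⁆ = f 3 + γ' • f 2 ∧
  ⁅f (n - 1), f n⁆ = f 4 + γ' • f 3 + β' • f 2

/-!
An adapted basis exists in any filiform algebra of dimension `n ≥ 4`: choose `y ∉ C²` avoiding
finitely many proper subspaces, so that `ad y` maps `Cᵏ \ Cᵏ⁺¹` into `Cᵏ⁺¹ \ Cᵏ⁺²`, complete it
by `v` to a basis of `L / C²`, and take `y, (ad y)ⁿ⁻² v, …, ad y v, v + s y`.

In an adapted basis with `z₁ = n - 2`, the vanishing of `⁅e k, e n⁆` for `k ≤ n - 3` propagates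
by the Jacobi identity with `e 1` to all `⁅e i, e j⁆` with `i ≤ n - 3`. Then
`X = ⁅e (n-2), e n⁆` and `Y = ⁅e (n-1), e n⁆` satisfy `(ad e₁)² X = 0` and `ad e₁ Y = X`;
as `ad e₁` shifts coordinates down by one, `X = γ e₂ + c e₃` and
`Y = δ e₁ + β e₂ + γ e₃ + c e₄`. Here `⁅e (n-2), e (n-1)⁆ = c e₂`, so `z₂ = n - 2` gives `c ≠ 0`,
the Jacobi identity for `e (n-2), e (n-1), e n` gives `δ = 0`, and rescaling `e 2, …, e n` by
`c⁻¹` normalises `c` to `1`.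
-/

theorem Submodule.le_sup_span_singleton_of_finrank_le {K V : Type*} [DivisionRing K]
    [AddCommGroup V] [Module K V] [FiniteDimensional K V] {W U : Submodule K V} {x : V}
    (hWU : W ≤ U) (hx : x ∈ U) (hxW : x ∉ W) (hU : finrank K U ≤ finrank K W + 1) :
    U ≤ W ⊔ K ∙ x :=
  (eq_of_le_of_finrank_le (sup_le hWU ((span_singleton_le_iff_mem x U).mpr hx))
    (hU.trans (finrank_sup_span_singleton hxW).ge)).ge

theorem Submodule.sup_span_singleton_le_sup_span_singleton_add_smul {K V : Type*} [Ring K]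
    [AddCommGroup V] [Module K V] (W : Submodule K V) (y v : V) (s : K) :
    W ⊔ (K ∙ y) ⊔ (K ∙ v) ≤ W ⊔ (K ∙ y) ⊔ (K ∙ (v + s • y)) := by
  refine sup_le le_sup_left ((span_singleton_le_iff_mem _ _).mpr ?_)
  simpa using sub_mem (mem_sup_right (mem_span_singleton_self (v + s • y)))
    (mem_sup_left (mem_sup_right (smul_mem _ s (mem_span_singleton_self y))))

theorem LieModule.lie_mem_lowerCentralSeries {R L : Type*} [CommRing R] [LieRing L]
    [LieAlgebra R L] {i j : ℕ} {x y : L} (hx : x ∈ lowerCentralSeries R L L i)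
    (hy : y ∈ lowerCentralSeries R L L j) : ⁅x, y⁆ ∈ lowerCentralSeries R L L (i + j + 1) := by
  induction j generalizing i x y with
  | zero =>
    rw [← lie_skew, add_zero, lowerCentralSeries_succ]
    exact neg_mem (LieSubmodule.lie_mem_lie (LieSubmodule.mem_top y) hx)
  | succ j ih =>
    have hspan : (lowerCentralSeries R L L (j + 1)).toSubmodule ≤
        (lowerCentralSeries R L L (i + (j + 1) + 1)).toSubmodule.comap
          (LieAlgebra.ad R L x) := by
      rw [lowerCentralSeries_succ, LieSubmodule.lieIdeal_oper_eq_linear_span', Submodule.span_le]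
      rintro - ⟨z, -, m, hm, rfl⟩
      have hxz : ⁅x, z⁆ ∈ lowerCentralSeries R L L (i + 1) := by
        rw [lowerCentralSeries_succ, LieSubmodule.lie_comm]
        exact LieSubmodule.lie_mem_lie hx (LieSubmodule.mem_top z)
      have h₁ := ih hxz hm
      have h₂ : ⁅z, ⁅x, m⁆⁆ ∈ lowerCentralSeries R L L (i + j + 1 + 1) := by
        rw [lowerCentralSeries_succ]
        exact LieSubmodule.lie_mem_lie (LieSubmodule.mem_top z) (ih hx hm)
      rw [show i + 1 + j + 1 = i + (j + 1) + 1 by omega] at h₁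
      rw [show i + j + 1 + 1 = i + (j + 1) + 1 by omega] at h₂
      change ⁅x, ⁅z, m⁆⁆ ∈ lowerCentralSeries R L L (i + (j + 1) + 1)
      rw [leibniz_lie]
      exact add_mem h₁ h₂
    simpa using hspan hy

section LowerCentralSeries

variable {L}

theorem mem_C_one (x : L) : x ∈ C L 1 := by
  rw [C, Nat.sub_self, LieModule.lowerCentralSeries_zero]
  exact LieSubmodule.mem_top x

theorem C_le_of_le {a b : ℕ} (hab : a ≤ b) : C L b ≤ C L a :=
  LieModule.antitone_lowerCentralSeries ℂ L L (by omega)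

theorem C_succ {k : ℕ} (hk : 1 ≤ k) : C L (k + 1) = ⁅(⊤ : LieIdeal ℂ L), C L k⁆ := by
  rw [C, C, show k + 1 - 1 = k - 1 + 1 by omega, LieModule.lowerCentralSeries_succ]

theorem lie_mem_C {a b : ℕ} (ha : 1 ≤ a) (hb : 1 ≤ b) {x y : L} (hx : x ∈ C L a)
    (hy : y ∈ C L b) : ⁅x, y⁆ ∈ C L (a + b) := by
  have := LieModule.lie_mem_lowerCentralSeries hx hy
  rwa [show a - 1 + (b - 1) + 1 = a + b - 1 by omega] at this

theorem lie_mem_C_succ {k : ℕ} (hk : 1 ≤ k) (x : L) {y : L} (hy : y ∈ C L k) :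
    ⁅x, y⁆ ∈ C L (k + 1) := by
  simpa [add_comm] using lie_mem_C le_rfl hk (mem_C_one x) hy

theorem C_succ_le_of_forall_lie_mem {k : ℕ} (hk : 1 ≤ k) {x : L}
    (hkx : (C L k).toSubmodule ≤ (C L (k + 1)).toSubmodule ⊔ ℂ ∙ x)
    (hx : ∀ y : L, ⁅y, x⁆ ∈ C L (k + 2)) : C L (k + 1) ≤ C L (k + 2) := by
  rw [C_succ hk, LieSubmodule.lie_le_iff]
  intro y _ m hm
  obtain ⟨m', hm', _, hmx, rfl⟩ := Submodule.mem_sup.mp (hkx hm)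
  obtain ⟨t, rfl⟩ := Submodule.mem_span_singleton.mp hmx
  rw [lie_add, lie_smul]
  exact add_mem (lie_mem_C_succ (by omega) y hm') (Submodule.smul_mem _ t (hx y))

theorem C_two_le_sup_span_lie {a b : L}
    (hab : ⊤ ≤ (C L 2).toSubmodule ⊔ (ℂ ∙ a) ⊔ (ℂ ∙ b)) :
    (C L 2).toSubmodule ≤ (C L 3).toSubmodule ⊔ ℂ ∙ ⁅a, b⁆ := by
  have hdecomp : ∀ y : L, ∃ c ∈ C L 2, ∃ s t : ℂ, y = c + s • a + t • b := by
    intro y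
    obtain ⟨p, hp, q, hb, rfl⟩ := Submodule.mem_sup.mp (hab (Submodule.mem_top (x := y)))
    obtain ⟨c, hc, r, ha, rfl⟩ := Submodule.mem_sup.mp hp
    obtain ⟨s, rfl⟩ := Submodule.mem_span_singleton.mp ha
    obtain ⟨t, rfl⟩ := Submodule.mem_span_singleton.mp hb
    exact ⟨c, hc, s, t, rfl⟩
  rw [C_succ le_rfl, LieSubmodule.lieIdeal_oper_eq_linear_span', Submodule.span_le]
  rintro - ⟨y, -, z, -, rfl⟩
  obtain ⟨c, hc, s, t, rfl⟩ := hdecomp y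
  obtain ⟨c', hc', s', t', rfl⟩ := hdecomp z
  have hexpand : ⁅c + s • a + t • b, c' + s' • a + t' • b⁆ =
      ⁅c, c' + s' • a + t' • b⁆ + ⁅s • a + t • b, c'⁆ + (s * t' - t * s') • ⁅a, b⁆ := by
    simp only [add_lie, lie_add, smul_lie, lie_smul, lie_self, ← lie_skew b a]
    module
  rw [hexpand]
  refine add_mem (Submodule.mem_sup_left (add_mem ?_ ?_))
    (Submodule.mem_sup_right (Submodule.smul_mem _ _ (Submodule.mem_span_singleton_self _)))
  · exact lie_mem_C (by norm_num) le_rfl hc (mem_C_one _)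
  · exact lie_mem_C_succ (by norm_num) _ hc'

theorem lie_notMem_C_of_le_sup_span {k : ℕ} (hk : 1 ≤ k) {x x' y : L}
    (hkx : (C L k).toSubmodule ≤ (C L (k + 1)).toSubmodule ⊔ ℂ ∙ x') (hx : x ∈ C L k)
    (hyx : ⁅y, x⁆ ∉ C L (k + 2)) : ⁅y, x'⁆ ∉ C L (k + 2) := by
  intro hyx'
  obtain ⟨m, hm, _, hp, rfl⟩ := Submodule.mem_sup.mp (hkx hx)
  obtain ⟨t, rfl⟩ := Submodule.mem_span_singleton.mp hp
  rw [lie_add, lie_smul] at hyx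
  exact hyx (add_mem (lie_mem_C_succ (by omega) y hm) (Submodule.smul_mem _ t hyx'))

theorem iterate_lie_mem_C (y v : L) (m : ℕ) : (⁅y, ·⁆)^[m] v ∈ C L (m + 1) := by
  induction m with
  | zero => exact mem_C_one v
  | succ m ih =>
    rw [Function.iterate_succ_apply']
    exact lie_mem_C_succ (by omega) y ih

theorem iterate_lie_notMem_C {n : ℕ} {y v : L}
    (hy : ∀ k, 2 ≤ k → k + 2 ≤ n → ∀ x ∈ C L k, x ∉ C L (k + 1) → ⁅y, x⁆ ∉ C L (k + 2))
    (hv : ⁅y, v⁆ ∉ C L 3) {m : ℕ} (hm : 1 ≤ m) (hmn : m + 2 ≤ n) :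
    (⁅y, ·⁆)^[m] v ∉ C L (m + 2) := by
  induction m, hm using Nat.le_induction with
  | base => exact hv
  | succ m hm ih =>
    rw [Function.iterate_succ_apply']
    exact hy (m + 1) (by omega) (by omega) _ (iterate_lie_mem_C y v m) (ih (by omega))

end LowerCentralSeries

namespace IsFiliform

variable {L} {n : ℕ}

theorem finrank_C (hL : IsFiliform L n) {k : ℕ} (hk : 2 ≤ k) (hkn : k ≤ n) :
    finrank ℂ (C L k).toSubmodule = n - k :=
  hL.2.2.2 k hk hkn

theorem finrank_C_one (hL : IsFiliform L n) : finrank ℂ (C L 1).toSubmodule = n := by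
  have : (C L 1).toSubmodule = ⊤ := eq_top_iff.mpr fun x _ => mem_C_one x
  rw [this, finrank_top, hL.2.2.1]

theorem C_eq_bot (hL : IsFiliform L n) : C L n = ⊥ := by
  have := hL.2.1
  have := hL.finrank_C hL.1 le_rfl
  rw [Nat.sub_self, Submodule.finrank_eq_zero] at this
  exact (LieSubmodule.toSubmodule_eq_bot _).mp this

theorem C_succ_lt (hL : IsFiliform L n) {k : ℕ} (hk : 1 ≤ k) (hkn : k < n) :
    C L (k + 1) < C L k := by
  refine lt_of_le_of_ne (C_le_of_le (by omega)) fun h => ?_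
  have hsucc := hL.finrank_C (k := k + 1) (by omega) hkn
  rw [h] at hsucc
  rcases hk.eq_or_lt with rfl | hk
  · rw [hL.finrank_C_one] at hsucc
    omega
  · rw [hL.finrank_C hk hkn.le] at hsucc
    omega

theorem C_le_sup_span (hL : IsFiliform L n) {k : ℕ} (hk : 2 ≤ k) (hkn : k < n) {x : L}
    (hx : x ∈ C L k) (hx' : x ∉ C L (k + 1)) :
    (C L k).toSubmodule ≤ (C L (k + 1)).toSubmodule ⊔ ℂ ∙ x := by
  have := hL.2.1
  refine Submodule.le_sup_span_singleton_of_finrank_le (C_le_of_le (by omega)) hx hx' ?_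
  rw [hL.finrank_C (by omega) hkn.le, hL.finrank_C (by omega) hkn]
  omega

theorem C_two_le_of_forall_exists (hL : IsFiliform L n) (S : Submodule ℂ L)
    (hS : ∀ k, 2 ≤ k → k < n → ∃ x ∈ S, x ∈ C L k ∧ x ∉ C L (k + 1)) :
    (C L 2).toSubmodule ≤ S := by
  suffices ∀ k, 2 ≤ k → k ≤ n → (C L k).toSubmodule ≤ S from this 2 le_rfl hL.1
  intro k hk hkn
  induction hkn using Nat.decreasingInduction with
  | self => simp [hL.C_eq_bot]
  | of_succ k hkn ih =>
    obtain ⟨x, hxS, hx, hx'⟩ := hS k hk hkn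
    exact (hL.C_le_sup_span hk hkn hx hx').trans
      (sup_le (ih (by omega)) ((Submodule.span_singleton_le_iff_mem x S).mpr hxS))

theorem exists_notMem_C_two_forall_lie_notMem (hL : IsFiliform L n) :
    ∃ y : L, y ∉ C L 2 ∧
      ∀ k, 2 ≤ k → k + 2 ≤ n → ∀ x ∈ C L k, x ∉ C L (k + 1) → ⁅y, x⁆ ∉ C L (k + 2) := by
  -- `y` must avoid `C L 2` (index `none`) and, for `k = i + 2`, the subspace of those `y` with
  -- `⁅x i, y⁆ ∈ C L (k + 2)` (index `some i`), which is proper because `C L (k + 1) ≠ C L (k + 2)`.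
  choose x hx hx' using fun i : Fin (n - 3) =>
    SetLike.exists_of_lt (hL.C_succ_lt (k := i + 2) (by omega) (by omega))
  let p : Option (Fin (n - 3)) → Submodule ℂ L := fun o =>
    o.elim (C L 2).toSubmodule fun i => (C L (i + 4)).toSubmodule.comap (LieAlgebra.ad ℂ L (x i))
  have hp : ∀ o, p o ≠ ⊤ := by
    rintro (_ | i) htop
    · have htop : (C L 2).toSubmodule = ⊤ := htop
      refine (hL.C_succ_lt le_rfl (by have := hL.1; omega)).not_ge fun y _ => ?_
      rw [← LieSubmodule.mem_toSubmodule, htop]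
      exact Submodule.mem_top
    · refine (hL.C_succ_lt (k := i + 3) (by omega) (by omega)).not_ge
        (C_succ_le_of_forall_lie_mem (k := i + 2) (by omega)
          (hL.C_le_sup_span (by omega) (by omega) (hx i) (hx' i)) fun y => ?_)
      have hy : ⁅x i, y⁆ ∈ (C L (i + 4)).toSubmodule := by
        change y ∈ p (some i)
        rw [htop]
        exact Submodule.mem_top
      rw [← lie_skew]
      exact neg_mem hy
  obtain ⟨y, hy⟩ := Submodule.exists_forall_notMem_of_forall_ne_top p hp
  refine ⟨y, hy none, fun k hk hkn x' hx₁ hx₂ => ?_⟩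
  obtain ⟨i, rfl⟩ : ∃ i : Fin (n - 3), k = i + 2 := ⟨⟨k - 2, by omega⟩, by simp; omega⟩
  have hyx : ⁅y, x i⁆ ∉ C L (i + 2 + 2) := by
    rw [← lie_skew, neg_mem_iff]
    exact hy (some i)
  exact lie_notMem_C_of_le_sup_span (by omega) (hL.C_le_sup_span hk (by omega) hx₁ hx₂) (hx i)
    hyx

theorem exists_top_le_sup_span (hL : IsFiliform L n) {y : L} (hy : y ∉ C L 2) :
    ∃ v : L, ⊤ ≤ (C L 2).toSubmodule ⊔ (ℂ ∙ y) ⊔ (ℂ ∙ v) := by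
  have := hL.2.1
  have hW := Submodule.finrank_sup_span_singleton (K := ℂ) (p := (C L 2).toSubmodule) hy
  rw [hL.finrank_C le_rfl hL.1] at hW
  obtain ⟨v, -, hv⟩ := SetLike.exists_of_lt (Submodule.lt_top_of_finrank_lt_finrank (by
    rw [hW, hL.2.2.1]; have := hL.1; omega) : (C L 2).toSubmodule ⊔ ℂ ∙ y < ⊤)
  refine ⟨v, Submodule.le_sup_span_singleton_of_finrank_le le_top Submodule.mem_top hv ?_⟩
  rw [finrank_top, hL.2.2.1, hW]
  omega

theorem lie_notMem_C_three (hL : IsFiliform L n) (hn : 3 ≤ n) {y v : L}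
    (hyv : ⊤ ≤ (C L 2).toSubmodule ⊔ (ℂ ∙ y) ⊔ (ℂ ∙ v)) : ⁅y, v⁆ ∉ C L 3 := fun h =>
  (hL.C_succ_lt (k := 2) (by norm_num) hn).not_ge fun _ hx => by
    simpa [(Submodule.span_singleton_le_iff_mem _ _).mpr h] using C_two_le_sup_span_lie hyv hx

theorem exists_eq_smul_of_mem_C_pred (hL : IsFiliform L n) (hn : 3 ≤ n) {x z : L}
    (hx : x ∈ C L (n - 1)) (hx' : x ∉ C L n) (hz : z ∈ C L (n - 1)) : ∃ s : ℂ, z = s • x := by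
  have := hL.C_le_sup_span (k := n - 1) (by omega) (by omega) hx
    (by rwa [Nat.sub_add_cancel (by omega)]) hz
  rw [Nat.sub_add_cancel (by omega), hL.C_eq_bot] at this
  simpa [Submodule.mem_span_singleton, eq_comm] using this

theorem lie_eq_zero_of_mem_C (hL : IsFiliform L n) {a b : ℕ} (ha : 1 ≤ a) (hb : 1 ≤ b)
    (hab : n ≤ a + b) {x y : L} (hx : x ∈ C L a) (hy : y ∈ C L b) : ⁅x, y⁆ = 0 := by
  have := C_le_of_le hab (lie_mem_C ha hb hx hy)
  rwa [hL.C_eq_bot, LieSubmodule.mem_bot] at this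

theorem exists_basis (hL : IsFiliform L n) {e : ℕ → L}
    (htop : ⊤ ≤ (C L 2).toSubmodule ⊔ (ℂ ∙ e 1) ⊔ (ℂ ∙ e n))
    (he : ∀ h, 2 ≤ h → h < n → e h ∈ C L (n + 1 - h) ∧ e h ∉ C L (n + 2 - h)) :
    ∃ b : Basis (Fin n) ℂ L, ∀ i, b i = e (i + 1) := by
  have := hL.1
  set S := Submodule.span ℂ (Set.range fun i : Fin n => e (i + 1))
  have hS : ∀ h, 1 ≤ h → h ≤ n → e h ∈ S := fun h h1 hn =>
    Submodule.subset_span ⟨⟨h - 1, by omega⟩, by simp only [Nat.sub_add_cancel h1]⟩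
  have hC2 : (C L 2).toSubmodule ≤ S := hL.C_two_le_of_forall_exists S fun k hk hkn => by
    have := he (n + 1 - k) (by omega) (by omega)
    rw [show n + 1 - (n + 1 - k) = k by omega, show n + 2 - (n + 1 - k) = k + 1 by omega] at this
    exact ⟨_, hS _ (by omega) (by omega), this⟩
  have htop' : ⊤ ≤ S := htop.trans <| sup_le (sup_le hC2
    ((Submodule.span_singleton_le_iff_mem _ _).mpr (hS 1 le_rfl (by omega))))
    ((Submodule.span_singleton_le_iff_mem _ _).mpr (hS n (by omega) le_rfl))
  exact ⟨basisOfTopLeSpanOfCardEqFinrank _ htop' (by simp [hL.2.2.1]),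
    fun i => by simp [coe_basisOfTopLeSpanOfCardEqFinrank]⟩

theorem isAdaptedBasis_of_iterate (hL : IsFiliform L n) (hn : 4 ≤ n) {y v : L} {s : ℂ}
    (hyv : ⊤ ≤ (C L 2).toSubmodule ⊔ (ℂ ∙ y) ⊔ (ℂ ∙ v))
    (hw : ∀ m, 1 ≤ m → m + 2 ≤ n → (⁅y, ·⁆)^[m] v ∉ C L (m + 2))
    (hs : ⁅(⁅y, ·⁆)^[n - 3] v, v⁆ = s • (⁅y, ·⁆)^[n - 2] v) :
    IsAdaptedBasis L n
      (fun h => if h = 1 then y else if h = n then v + s • y else (⁅y, ·⁆)^[n - h] v) := by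
  set e : ℕ → L := fun h => if h = 1 then y else if h = n then v + s • y else (⁅y, ·⁆)^[n - h] v
  have he1 : e 1 = y := if_pos rfl
  have hen : e n = v + s • y := by simp [e, show n ≠ 1 by omega]
  have he : ∀ h, 2 ≤ h → h < n → e h = (⁅y, ·⁆)^[n - h] v := fun h h2 hn =>
    by simp [e, show h ≠ 1 by omega, show h ≠ n by omega]
  have hsucc : ∀ m, (⁅y, ·⁆)^[m + 1] v = ⁅y, (⁅y, ·⁆)^[m] v⁆ := fun m =>
    Function.iterate_succ_apply' _ _ _
  refine ⟨hL.exists_basis ?_ fun h h2 hn => ?_, fun h h3 hn => ?_, fun h h1 hn => ?_,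
    fun h h2 hn => ?_⟩
  · rw [he1, hen]
    exact hyv.trans (Submodule.sup_span_singleton_le_sup_span_singleton_add_smul _ y v s)
  · rw [he h h2 hn, show n + 1 - h = n - h + 1 by omega, show n + 2 - h = n - h + 2 by omega]
    exact ⟨iterate_lie_mem_C y v _, hw _ (by omega) (by omega)⟩
  · rw [he1]
    rcases hn.eq_or_lt with rfl | hn
    · rw [hen, lie_add, lie_smul, lie_self, smul_zero, add_zero, he _ (by omega) (by omega),
        show h - (h - 1) = 0 + 1 by omega, hsucc, Function.iterate_zero_apply]
    · rw [he h (by omega) hn, he (h - 1) (by omega) (by omega),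
        show n - (h - 1) = n - h + 1 by omega, hsucc]
  · rw [he 2 le_rfl (by omega)]
    refine hL.lie_eq_zero_of_mem_C (a := n - 1) (b := 1) (by omega) le_rfl (by omega) ?_
      (mem_C_one _)
    simpa [show n - 2 + 1 = n - 1 by omega] using iterate_lie_mem_C y v (n - 2)
  · have hw3 : (⁅y, ·⁆)^[n - 3] v ∈ C L (n - 2) := by
      simpa [show n - 3 + 1 = n - 2 by omega] using iterate_lie_mem_C y v (n - 3)
    rw [he 3 (by omega) (by omega)]
    rcases hn.eq_or_lt with rfl | hn
    · -- this is what the correction `s • y` in `e n` is for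
      rw [hen, lie_add, lie_smul, hs, ← lie_skew, ← hsucc, show h - 3 + 1 = h - 2 by omega,
        smul_neg, add_neg_cancel]
    · refine hL.lie_eq_zero_of_mem_C (a := n - 2) (b := 2) (by omega) (by omega) (by omega) hw3 ?_
      rw [he h h2 hn]
      exact C_le_of_le (by omega) (iterate_lie_mem_C y v (n - h))

theorem exists_isAdaptedBasis (hL : IsFiliform L n) (hn : 4 ≤ n) :
    ∃ e : ℕ → L, IsAdaptedBasis L n e := by
  obtain ⟨y, hy2, hy⟩ := hL.exists_notMem_C_two_forall_lie_notMem
  obtain ⟨v, hyv⟩ := hL.exists_top_le_sup_span hy2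
  have hw : ∀ m, 1 ≤ m → m + 2 ≤ n → (⁅y, ·⁆)^[m] v ∉ C L (m + 2) := fun m hm hmn =>
    iterate_lie_notMem_C hy (hL.lie_notMem_C_three (by omega) hyv) hm hmn
  obtain ⟨s, hs⟩ := hL.exists_eq_smul_of_mem_C_pred (x := (⁅y, ·⁆)^[n - 2] v)
    (z := ⁅(⁅y, ·⁆)^[n - 3] v, v⁆) (by omega)
    (by simpa [show n - 2 + 1 = n - 1 by omega] using iterate_lie_mem_C y v (n - 2))
    (by simpa [show n - 2 + 2 = n by omega] using hw (n - 2) (by omega) (by omega))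
    (by simpa [show n - 3 + 1 + 1 = n - 1 by omega] using
      lie_mem_C (by omega) le_rfl (iterate_lie_mem_C y v (n - 3)) (mem_C_one v))
  exact ⟨_, hL.isAdaptedBasis_of_iterate hn hyv hw hs⟩

end IsFiliform

namespace Module.Basis

variable {K V : Type*} [Semiring K] [AddCommMonoid V] [Module K V] {n : ℕ}

/-- The coordinate along `b (h - 1)`, and `0` for `h ∉ [1, n]`; for `b i = e (i + 1)` it is the
coordinate along `e h`. -/
noncomputable def natCoord (b : Basis (Fin n) K V) (h : ℕ) : V →ₗ[K] K :=
  if hh : 1 ≤ h ∧ h ≤ n then b.coord ⟨h - 1, by omega⟩ else 0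

theorem natCoord_apply_self (b : Basis (Fin n) K V) (i : Fin n) (h : ℕ) :
    b.natCoord h (b i) = if h = i + 1 then 1 else 0 := by
  unfold natCoord
  split_ifs with hh hi hi
  · simp [hi]
  · simp [Finsupp.single_apply, Fin.ext_iff]
    omega
  · omega
  · rfl

theorem ext_natCoord (b : Basis (Fin n) K V) {x y : V}
    (hxy : ∀ h, 1 ≤ h → h ≤ n → b.natCoord h x = b.natCoord h y) : x = y :=
  b.ext_elem fun i => by
    have := hxy (i + 1) (by omega) (by omega)
    rw [natCoord, dif_pos (by omega)] at this
    simpa using this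

theorem natCoord_apply_of_eq {b : Basis (Fin n) K V} {e : ℕ → V} (hb : ∀ i : Fin n, b i = e (i + 1))
    {k : ℕ} (hk : 1 ≤ k) (hkn : k ≤ n) (h : ℕ) : b.natCoord h (e k) = if h = k then 1 else 0 := by
  simpa [hb, Nat.sub_add_cancel hk] using b.natCoord_apply_self ⟨k - 1, by omega⟩ h

end Module.Basis

namespace IsAdaptedBasis

variable {L} {n : ℕ} {e : ℕ → L}

theorem ne_zero (he : IsAdaptedBasis L n e) {k : ℕ} (hk : 1 ≤ k) (hkn : k ≤ n) : e k ≠ 0 := by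
  obtain ⟨⟨b, hb⟩, -⟩ := he
  simpa [hb, Nat.sub_add_cancel hk] using b.ne_zero ⟨k - 1, by omega⟩

theorem lie_eq_zero_of_le_three (he : IsAdaptedBasis L n e) {i j : ℕ} (hi : 2 ≤ i) (hi3 : i ≤ 3)
    (hj : 2 ≤ j) (hjn : j ≤ n) : ⁅e i, e j⁆ = 0 := by
  obtain rfl | rfl : i = 2 ∨ i = 3 := by omega
  · exact he.2.2.1 j (by omega) hjn
  · exact he.2.2.2 j hj hjn

theorem lie_eq_zero_of_le_one (he : IsAdaptedBasis L n e) {i : ℕ} (hi : i ≤ 1) (hin : i < n) :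
    ⁅e 1, e (i + 1)⁆ = 0 := by
  obtain rfl | rfl : i = 0 ∨ i = 1 := by omega
  · exact lie_self _
  · rw [← lie_skew, he.2.2.1 1 le_rfl (by omega), neg_zero]

theorem lie_eq_zero_of_le_three_right (he : IsAdaptedBasis L n e) {i j : ℕ} (hi : 2 ≤ i)
    (hi3 : i ≤ 3) (hj : 2 ≤ j) (hjn : j ≤ n) : ⁅e j, e i⁆ = 0 := by
  rw [← lie_skew, he.lie_eq_zero_of_le_three hi hi3 hj hjn, neg_zero]

theorem lie_one_lie (he : IsAdaptedBasis L n e) {i j : ℕ} (hi : 3 ≤ i) (hin : i ≤ n)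
    (hj : 3 ≤ j) (hjn : j ≤ n) : ⁅e 1, ⁅e i, e j⁆⁆ = ⁅e (i - 1), e j⁆ + ⁅e i, e (j - 1)⁆ := by
  rw [leibniz_lie, he.2.1 i hi hin, he.2.1 j hj hjn]

theorem lie_eq_zero_of_lie_last_eq_zero (he : IsAdaptedBasis L n e) {m : ℕ}
    (hm : ∀ k, 4 ≤ k → k ≤ m → ⁅e k, e n⁆ = 0) {i j : ℕ} (hi : 2 ≤ i) (him : i ≤ m)
    (hij : i < j) (hjn : j ≤ n) : ⁅e i, e j⁆ = 0 := by
  induction hjn using Nat.decreasingInduction generalizing i with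
  | self =>
    rcases le_or_gt i 3 with hi3 | hi3
    · exact he.lie_eq_zero_of_le_three hi hi3 (by omega) le_rfl
    · exact hm i hi3 him
  | of_succ j hjn ih =>
    rcases le_or_gt i 3 with hi3 | hi3
    · exact he.lie_eq_zero_of_le_three hi hi3 (by omega) hjn.le
    · have := he.lie_one_lie (i := i) (j := j + 1) (by omega) (by omega) (by omega) hjn
      rwa [ih hi him (by omega), lie_zero, ih (i := i - 1) (by omega) (by omega) (by omega),
        zero_add, Nat.add_sub_cancel, eq_comm] at this

theorem natCoord_lie_one (he : IsAdaptedBasis L n e) {b : Basis (Fin n) ℂ L}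
    (hb : ∀ i : Fin n, b i = e (i + 1)) (h : ℕ) (x : L) :
    b.natCoord h ⁅e 1, x⁆ = if h ≤ 1 then 0 else b.natCoord (h + 1) x := by
  have hbasis : ∀ i : Fin n,
      b.natCoord h ⁅e 1, b i⁆ = if h ≤ 1 then 0 else b.natCoord (h + 1) (b i) := by
    intro i
    rw [hb, b.natCoord_apply_of_eq hb (by omega) (by omega)]
    rcases (show i.1 ≤ 1 ∨ 2 ≤ i.1 by omega) with hi | hi
    · rw [he.lie_eq_zero_of_le_one hi i.2, map_zero]
      split_ifs <;> first | rfl | omega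
    · rw [he.2.1 _ (by omega) (by omega), Nat.add_sub_cancel,
        b.natCoord_apply_of_eq hb (by omega) (by omega)]
      split_ifs <;> first | rfl | omega
  split_ifs with h1
  · exact LinearMap.congr_fun (f := (b.natCoord h).comp (LieAlgebra.ad ℂ L (e 1))) (g := 0)
      (b.ext fun i => by simpa [h1] using hbasis i) x
  · exact LinearMap.congr_fun (f := (b.natCoord h).comp (LieAlgebra.ad ℂ L (e 1)))
      (g := b.natCoord (h + 1)) (b.ext fun i => by simpa [h1] using hbasis i) x

theorem exists_coeffs_of_lie_one (he : IsAdaptedBasis L n e) (hn : 4 ≤ n) {X Y : L}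
    (hX : ⁅e 1, ⁅e 1, X⁆⁆ = 0) (hY : ⁅e 1, Y⁆ = X) :
    ∃ a c d δ : ℂ, X = a • e 2 + c • e 3 ∧ Y = δ • e 1 + d • e 2 + a • e 3 + c • e 4 := by
  obtain ⟨b, hb⟩ := he.1
  have hcoord := he.natCoord_lie_one hb
  have hXhigh : ∀ h, 4 ≤ h → b.natCoord h X = 0 := fun h h4 => by
    have := congrArg (b.natCoord (h - 2)) hX
    rwa [hcoord, if_neg (by omega), hcoord, if_neg (by omega), map_zero,
      show h - 2 + 1 + 1 = h by omega] at this
  have hXY : ∀ h, b.natCoord h X = if h ≤ 1 then 0 else b.natCoord (h + 1) Y := fun h => by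
    rw [← hY, hcoord]
  have he := fun k (hk : 1 ≤ k ∧ k ≤ n) => b.natCoord_apply_of_eq hb hk.1 hk.2
  refine ⟨b.natCoord 2 X, b.natCoord 3 X, b.natCoord 2 Y, b.natCoord 1 Y,
    b.ext_natCoord fun h h1 hhn => ?_, b.ext_natCoord fun h h1 hhn => ?_⟩ <;>
  simp only [map_add, map_smul, he 1 (by omega), he 2 (by omega), he 3 (by omega),
    he 4 (by omega), smul_eq_mul, mul_ite, mul_one, mul_zero]
  · obtain rfl | rfl | rfl | h4 : h = 1 ∨ h = 2 ∨ h = 3 ∨ 4 ≤ h := by omega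
    · simpa using hXY 1
    · simp
    · simp
    · simp [hXhigh h h4, show h ≠ 2 by omega, show h ≠ 3 by omega]
  · obtain rfl | rfl | rfl | rfl | h5 : h = 1 ∨ h = 2 ∨ h = 3 ∨ h = 4 ∨ 5 ≤ h := by omega
    · simp
    · simp
    · simpa using (hXY 2).symm
    · simpa using (hXY 3).symm
    · have := hXY (h - 1)
      rw [hXhigh (h - 1) (by omega), if_neg (by omega), Nat.sub_add_cancel (by omega)] at this
      simp [← this, show h ≠ 1 by omega, show h ≠ 2 by omega, show h ≠ 3 by omega,
        show h ≠ 4 by omega]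

theorem coeff_one_eq_zero_of_lie_eq (he : IsAdaptedBasis L n e) (hn : 6 ≤ n)
    (hzero : ∀ i j, 2 ≤ i → i ≤ n - 3 → i < j → j ≤ n → ⁅e i, e j⁆ = 0) {c γ β δ : ℂ}
    (h₁ : ⁅e (n - 2), e (n - 1)⁆ = c • e 2) (h₂ : ⁅e (n - 2), e n⁆ = γ • e 2 + c • e 3)
    (h₃ : ⁅e (n - 1), e n⁆ = δ • e 1 + β • e 2 + γ • e 3 + c • e 4) : δ = 0 := by
  have h4 : ⁅e (n - 2), e 4⁆ = 0 := by
    rcases (show n = 6 ∨ 7 ≤ n by omega) with rfl | h7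
    · exact lie_self _
    · rw [← lie_skew, hzero 4 (n - 2) (by omega) (by omega) (by omega) (by omega), neg_zero]
  have h1 : ⁅e (n - 2), e 1⁆ = -e (n - 3) := by
    rw [← lie_skew, he.2.1 (n - 2) (by omega) (by omega), show n - 2 - 1 = n - 3 by omega]
  have hcentral : ∀ i j, 2 ≤ i → i ≤ 3 → n - 2 ≤ j → j ≤ n - 1 → ⁅e j, e i⁆ = 0 :=
    fun i j hi hi3 hj hjn => he.lie_eq_zero_of_le_three_right hi hi3 (by omega) (by omega)
  -- The Jacobi identity reduces to `-δ • e (n - 3) = 0`.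
  have hjac := leibniz_lie (e (n - 2)) (e (n - 1)) (e n)
  rw [h₃, h₁, h₂] at hjac
  simp only [lie_add, lie_smul, smul_lie, h1, h4, he.2.2.1 n (by omega) le_rfl,
    hcentral 2 (n - 2) le_rfl (by omega) le_rfl (by omega),
    hcentral 3 (n - 2) (by omega) le_rfl le_rfl (by omega),
    hcentral 2 (n - 1) le_rfl (by omega) (by omega) le_rfl,
    hcentral 3 (n - 1) (by omega) le_rfl (by omega) le_rfl, smul_zero, add_zero, smul_neg,
    neg_eq_zero] at hjac
  exact (smul_eq_zero.mp hjac).resolve_right (he.ne_zero (by omega) (by omega))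

theorem exists_brackets_of_lie_eq_zero (he : IsAdaptedBasis L n e) (hn : 6 ≤ n)
    (hzero : ∀ i j, 2 ≤ i → i ≤ n - 3 → i < j → j ≤ n → ⁅e i, e j⁆ = 0)
    (hne : ⁅e (n - 2), e (n - 1)⁆ ≠ 0) :
    ∃ c γ β : ℂ, c ≠ 0 ∧ ⁅e (n - 2), e (n - 1)⁆ = c • e 2 ∧
      ⁅e (n - 2), e n⁆ = γ • e 2 + c • e 3 ∧ ⁅e (n - 1), e n⁆ = β • e 2 + γ • e 3 + c • e 4 := by
  have hshift : ⁅e (n - 2), e (n - 1)⁆ = ⁅e 1, ⁅e (n - 2), e n⁆⁆ := by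
    rw [he.lie_one_lie (by omega) (by omega) (by omega) le_rfl, show n - 2 - 1 = n - 3 by omega,
      hzero (n - 3) n (by omega) le_rfl (by omega) le_rfl, zero_add]
  have hkill : ⁅e 1, ⁅e 1, ⁅e (n - 2), e n⁆⁆⁆ = 0 := by
    rw [← hshift, he.lie_one_lie (by omega) (by omega) (by omega) (by omega),
      show n - 2 - 1 = n - 3 by omega, hzero (n - 3) (n - 1) (by omega) le_rfl (by omega)
      (by omega), show n - 1 - 1 = n - 2 by omega, lie_self, add_zero]
  have hlift : ⁅e 1, ⁅e (n - 1), e n⁆⁆ = ⁅e (n - 2), e n⁆ := by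
    rw [he.lie_one_lie (by omega) (by omega) (by omega) le_rfl, show n - 1 - 1 = n - 2 by omega,
      lie_self, add_zero]
  obtain ⟨γ, c, β, δ, h₂, h₃⟩ := he.exists_coeffs_of_lie_one (by omega) hkill hlift
  have h₁ : ⁅e (n - 2), e (n - 1)⁆ = c • e 2 := by
    rw [hshift, h₂, lie_add, lie_smul, lie_smul, he.lie_eq_zero_of_le_one (i := 1) le_rfl
      (by omega), he.2.1 3 le_rfl (by omega), smul_zero, zero_add]
  have hc : c ≠ 0 := by
    rintro rfl
    exact hne (by rw [h₁, zero_smul])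
  have hδ := he.coeff_one_eq_zero_of_lie_eq hn hzero h₁ h₂ h₃
  exact ⟨c, γ, β, hc, h₁, h₂, by rw [h₃, hδ, zero_smul, zero_add]⟩

theorem rescale (he : IsAdaptedBasis L n e) {t : ℂ} (ht : t ≠ 0) :
    IsAdaptedBasis L n (fun h => if h = 1 then e 1 else t • e h) := by
  obtain ⟨b, hb⟩ := he.1
  refine ⟨⟨b.unitsSMul fun i => if i.1 = 0 then 1 else Units.mk0 t ht, fun i => ?_⟩,
    fun h h3 hn => ?_, fun h h1 hn => ?_, fun h h2 hn => ?_⟩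
  · rw [Basis.unitsSMul_apply, hb]
    by_cases hi : i.1 = 0 <;> simp [hi]
  · simp [show h ≠ 1 by omega, show h - 1 ≠ 1 by omega, lie_smul, he.2.1 h h3 hn]
  · have := he.2.2.1 h h1 hn
    by_cases h1 : h = 1 <;> simp_all [smul_lie, lie_smul]
  · simp [show h ≠ 1 by omega, smul_lie, lie_smul, he.2.2.2 h h2 hn]

theorem lawNm2Normalized_rescale (he : IsAdaptedBasis L n e) (hn : 6 ≤ n)
    (hzero : ∀ i j, 2 ≤ i → i ≤ n - 3 → i < j → j ≤ n → ⁅e i, e j⁆ = 0) {c γ β : ℂ}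
    (hc : c ≠ 0) (h₁ : ⁅e (n - 2), e (n - 1)⁆ = c • e 2)
    (h₂ : ⁅e (n - 2), e n⁆ = γ • e 2 + c • e 3)
    (h₃ : ⁅e (n - 1), e n⁆ = β • e 2 + γ • e 3 + c • e 4) :
    LawNm2Normalized L n (fun h => if h = 1 then e 1 else c⁻¹ • e h) (γ / c) (β / c) := by
  refine ⟨?_, (he.rescale (inv_ne_zero hc)).2.1, fun i j hi hij hjn hex₁ hex₂ hex₃ => ?_, ?_, ?_,
    ?_⟩
  · simp [lie_smul, he.lie_eq_zero_of_le_one (i := 1) le_rfl (by omega)]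
  · simp [show i ≠ 1 by omega, show j ≠ 1 by omega, smul_lie, lie_smul,
      hzero i j hi (by omega) hij hjn]
  · simp only [if_neg (show n - 2 ≠ 1 by omega), if_neg (show n - 1 ≠ 1 by omega),
      if_neg (show (2 : ℕ) ≠ 1 by norm_num), smul_lie, lie_smul, h₁]
    match_scalars
    field_simp
  · simp only [if_neg (show n - 2 ≠ 1 by omega), if_neg (show n ≠ 1 by omega),
      if_neg (show (2 : ℕ) ≠ 1 by norm_num), if_neg (show (3 : ℕ) ≠ 1 by norm_num), smul_lie,
      lie_smul, h₂]
    match_scalars <;> field_simp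
  · simp only [if_neg (show n - 1 ≠ 1 by omega), if_neg (show n ≠ 1 by omega),
      if_neg (show (2 : ℕ) ≠ 1 by norm_num), if_neg (show (3 : ℕ) ≠ 1 by norm_num),
      if_neg (show (4 : ℕ) ≠ 1 by norm_num), smul_lie, lie_smul, h₃]
    match_scalars <;> field_simp

end IsAdaptedBasis

/-- Every filiform Lie algebra with triple `(n-2, n-2, n)`, `n ≥ 6`, admits an adapted
basis realizing the normalized law. -/
theorem statement5 (n : ℕ) (hn : 6 ≤ n) (h : HasTriple L (n - 2) (n - 2) n) :
    ∃ (f : ℕ → L) (γ' β' : ℂ),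
      IsAdaptedBasis L n f ∧ LawNm2Normalized L n f γ' β' := by
  obtain ⟨hL, -, htriple⟩ := h
  obtain ⟨e, he⟩ := hL.exists_isAdaptedBasis (by omega)
  obtain ⟨hz₁, hz₂⟩ := htriple e he
  have hzero : ∀ i j, 2 ≤ i → i ≤ n - 3 → i < j → j ≤ n → ⁅e i, e j⁆ = 0 :=
    fun i j hi hin hij hjn => he.lie_eq_zero_of_lie_last_eq_zero
      (fun k hk hkn => by_contra fun hne => by have := hz₁.2 ⟨hk, hne⟩; omega) hi hin hij hjn
  have hne : ⁅e (n - 2), e (n - 1)⁆ ≠ 0 := by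
    simpa [show n - 2 + 1 = n - 1 by omega] using hz₂.1.2
  obtain ⟨c, γ, β, hc, h₁, h₂, h₃⟩ := he.exists_brackets_of_lie_eq_zero hn hzero hne
  exact ⟨_, γ / c, β / c, he.rescale (inv_ne_zero hc),
    he.lawNm2Normalized_rescale hn hzero hc h₁ h₂ h₃⟩
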